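/- Let (V,τ) be an irreducible conic representation of a topological group G that is a factor of some degenerate conic representation of G (i.e., there exists a surjective homomorphism of conic representations from a degenerate conic representation onto (V,τ)). Then (V,τ) is itself degenerate: it admits a G-invariant section. -/

import Mathlib

open Set

/-- `Q` is a section of the cone `V`, defined by the continuous conic (additive, positively
homogeneous, nonnegative) function `L`, which is strictly positive away from `0`. -/
structure IsConicSection {X : Type*} [AddCommGroup X] [Module ℝ X] [TopologicalSpace X]
    (V : Set X) (L : X → ℝ) (Q : Set X) : Prop where
  continuousOn : ContinuousOn L V
  nonneg : ∀ x ∈ V, 0 ≤ L x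
  map_add : ∀ x ∈ V, ∀ y ∈ V, L (x + y) = L x + L y
  map_smul : ∀ x ∈ V, ∀ a : ℝ, 0 ≤ a → L (a • x) = a * L x
  pos : ∀ x ∈ V, x ≠ 0 → 0 < L x
  sect_eq : Q = {x ∈ V | L x = 1}

/-- A conic representation of a topological group `G`: a nonzero cone `V` (a subset of a real
topological vector space closed under nonnegative linear combinations) admitting a compact
section, together with a continuous action `τ` of `G` on `V` by maps preserving nonnegative
linear combinations. -/
structure IsConicRep (G : Type*) {X : Type*} [Group G] [TopologicalSpace G]
    [AddCommGroup X] [Module ℝ X] [TopologicalSpace X]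
    (V : Set X) (τ : G → X → X) : Prop where
  nonempty : V.Nonempty
  ne_zero : V ≠ {0}
  cone : ∀ x ∈ V, ∀ y ∈ V, ∀ a b : ℝ, 0 ≤ a → 0 ≤ b → a • x + b • y ∈ V
  mapsTo : ∀ g : G, MapsTo (τ g) V V
  continuousOn : ContinuousOn (fun p : G × X => τ p.1 p.2) (univ ×ˢ V)
  act_one : ∀ x ∈ V, τ 1 x = x
  act_mul : ∀ g h : G, ∀ x ∈ V, τ (g * h) x = τ g (τ h x)
  conic_act : ∀ g : G, ∀ x ∈ V, ∀ y ∈ V, ∀ a b : ℝ, 0 ≤ a → 0 ≤ b →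
    τ g (a • x + b • y) = a • τ g x + b • τ g y
  exists_compact_section : ∃ (L : X → ℝ) (Q : Set X), IsConicSection V L Q ∧ IsCompact Q

/-- A homomorphism of conic representations of `G`: a continuous map preserving nonnegative
linear combinations, vanishing only at `0`, and commuting with the group actions. -/
structure IsConicHom (G : Type*) {X₁ X₂ : Type*} [Group G]
    [AddCommGroup X₁] [Module ℝ X₁] [TopologicalSpace X₁]
    [AddCommGroup X₂] [Module ℝ X₂] [TopologicalSpace X₂]
    (V₁ : Set X₁) (τ : G → X₁ → X₁) (V₂ : Set X₂) (η : G → X₂ → X₂)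
    (φ : X₁ → X₂) : Prop where
  continuousOn : ContinuousOn φ V₁
  mapsTo : MapsTo φ V₁ V₂
  conic : ∀ x ∈ V₁, ∀ y ∈ V₁, ∀ a b : ℝ, 0 ≤ a → 0 ≤ b →
    φ (a • x + b • y) = a • φ x + b • φ y
  ne_zero : ∀ x ∈ V₁, x ≠ 0 → φ x ≠ 0
  equivariant : ∀ g : G, ∀ x ∈ V₁, φ (τ g x) = η g (φ x)

/-- A conic representation is irreducible if its only nonzero closed `G`-invariant subcone
is the whole cone. -/
def IsIrreducibleConicRep (G : Type*) {X : Type*} [Group G]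
    [AddCommGroup X] [Module ℝ X] [TopologicalSpace X]
    (V : Set X) (τ : G → X → X) : Prop :=
  ∀ W : Set X, W ⊆ V → W.Nonempty → W ≠ {0} → IsClosed W →
    (∀ x ∈ W, ∀ y ∈ W, ∀ a b : ℝ, 0 ≤ a → 0 ≤ b → a • x + b • y ∈ W) →
    (∀ g : G, MapsTo (τ g) W W) → W = V

/-- A conic representation is degenerate if it admits a `G`-invariant section. -/
def IsDegenerateConicRep (G : Type*) {X : Type*} [Group G]
    [AddCommGroup X] [Module ℝ X] [TopologicalSpace X]
    (V : Set X) (τ : G → X → X) : Prop :=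
  ∃ (L : X → ℝ) (Q : Set X), IsConicSection V L Q ∧ ∀ g : G, MapsTo (τ g) Q Q


/-!
The graph `Λ = {(φ y, L' y) : y ∈ V'}` of the invariant section `L'` of `V'`, pushed forward
along `φ`, is a cone in `X × ℝ` invariant under `τ g × id` and squeezed between two multiples
of a compact section of `V`. By compactness its closure contains a minimal nonzero closed
invariant subcone `M`. The projection of `M` to `X` is a closed invariant subcone of `V`, hence
all of `V` by irreducibility. Minimality also forces `M` to be a graph: if `(x, t)` and
`(x, r t)` lie in `M` with `r > 1`, then `M` is stable under `(x, t) ↦ (x, r t)`, and iterating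
contradicts the upper bound on `M`. The function whose graph is `M` is then a `G`-invariant
section of `V`.
-/

open Filter Topology

def IsCone {E : Type*} [AddCommGroup E] [Module ℝ E] (V : Set E) : Prop :=
  ∀ x ∈ V, ∀ y ∈ V, ∀ a b : ℝ, 0 ≤ a → 0 ≤ b → a • x + b • y ∈ V

namespace IsCone

variable {E : Type*} [AddCommGroup E] [Module ℝ E] {V : Set E}

theorem smul_mem (hV : IsCone V) {x : E} (hx : x ∈ V) {a : ℝ} (ha : 0 ≤ a) :
    a • x ∈ V := by
  simpa using hV x hx x hx a 0 ha le_rfl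

theorem add_mem (hV : IsCone V) {x y : E} (hx : x ∈ V) (hy : y ∈ V) : x + y ∈ V := by
  simpa using hV x hx y hy 1 1 zero_le_one zero_le_one

theorem zero_mem (hV : IsCone V) (hne : V.Nonempty) : (0 : E) ∈ V := by
  obtain ⟨x, hx⟩ := hne
  simpa using hV.smul_mem hx le_rfl

theorem image {F : Type*} [AddCommGroup F] [Module ℝ F] (hV : IsCone V) {f : E → F}
    (hf : ∀ x ∈ V, ∀ y ∈ V, ∀ a b : ℝ, 0 ≤ a → 0 ≤ b →
      f (a • x + b • y) = a • f x + b • f y) :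
    IsCone (f '' V) := by
  rintro _ ⟨x, hx, rfl⟩ _ ⟨y, hy, rfl⟩ a b ha hb
  exact ⟨a • x + b • y, hV x hx y hy a b ha hb, hf x hx y hy a b ha hb⟩

theorem preimage {F : Type*} [AddCommGroup F] [Module ℝ F] {W : Set F} (hW : IsCone W)
    {f : E → F} (hf : ∀ x y : E, ∀ a b : ℝ, f (a • x + b • y) = a • f x + b • f y) :
    IsCone (f ⁻¹' W) := by
  intro x hx y hy a b ha hb
  simpa only [mem_preimage, hf] using hW _ hx _ hy a b ha hb

theorem inter (hV : IsCone V) {W : Set E} (hW : IsCone W) : IsCone (V ∩ W) :=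
  fun x hx y hy a b ha hb => ⟨hV x hx.1 y hy.1 a b ha hb, hW x hx.2 y hy.2 a b ha hb⟩

theorem sInter {S : Set (Set E)} (hS : ∀ W ∈ S, IsCone W) : IsCone (⋂₀ S) :=
  fun x hx y hy a b ha hb W hW => hS W hW x (hx W hW) y (hy W hW) a b ha hb

theorem closure [TopologicalSpace E] [ContinuousAdd E] [ContinuousSMul ℝ E] (hV : IsCone V) :
    IsCone (closure V) := fun x hx y hy a b ha hb =>
  map_mem_closure₂ (f := fun x y => a • x + b • y) (by fun_prop) hx hy
    fun x hx y hy => hV x hx y hy a b ha hb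

end IsCone

theorem Ultrafilter.tendsto_atTop_or_eventually_le {α : Type*} (U : Ultrafilter α)
    (f : α → ℝ) : Tendsto f U atTop ∨ ∃ c, ∀ᶠ y in (U : Filter α), f y ≤ c := by
  refine or_iff_not_imp_right.2 fun h => tendsto_atTop.2 fun c => ?_
  push Not at h
  exact (h c).mono fun _ hy => hy.le

namespace IsConicSection

variable {X : Type*} [AddCommGroup X] [Module ℝ X] [TopologicalSpace X] {V : Set X}
  {L : X → ℝ} {Q : Set X}

theorem subset (hs : IsConicSection V L Q) : Q ⊆ V := by
  rw [hs.sect_eq]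
  exact fun x hx => hx.1

theorem map_zero (hs : IsConicSection V L Q) (h0 : (0 : X) ∈ V) : L 0 = 0 := by
  simpa using hs.map_smul 0 h0 0 le_rfl

theorem mem_iff (hs : IsConicSection V L Q) {x : X} : x ∈ Q ↔ x ∈ V ∧ L x = 1 := by
  rw [hs.sect_eq]
  rfl

theorem ne_zero_of_mem (hs : IsConicSection V L Q) {q : X} (hq : q ∈ Q) : q ≠ 0 := by
  rintro rfl
  have h := hs.mem_iff.1 hq
  rw [hs.map_zero h.1] at h
  exact zero_ne_one h.2

theorem inv_smul_mem (hs : IsConicSection V L Q) (hV : IsCone V) {x : X} (hx : x ∈ V)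
    (hx0 : x ≠ 0) : (L x)⁻¹ • x ∈ Q := by
  have hLx := hs.pos x hx hx0
  refine hs.mem_iff.2 ⟨hV.smul_mem hx (inv_nonneg.2 hLx.le), ?_⟩
  rw [hs.map_smul x hx _ (inv_nonneg.2 hLx.le), inv_mul_cancel₀ hLx.ne']

theorem map_comb (hs : IsConicSection V L Q) (hV : IsCone V) {x y : X} (hx : x ∈ V)
    (hy : y ∈ V) {a b : ℝ} (ha : 0 ≤ a) (hb : 0 ≤ b) :
    L (a • x + b • y) = a * L x + b * L y := by
  rw [hs.map_add _ (hV.smul_mem hx ha) _ (hV.smul_mem hy hb), hs.map_smul x hx a ha,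
    hs.map_smul y hy b hb]

theorem mono (hs : IsConicSection V L Q) {W : Set X} (hW : W ⊆ V) :
    IsConicSection W L {x ∈ W | L x = 1} where
  continuousOn := hs.continuousOn.mono hW
  nonneg x hx := hs.nonneg x (hW hx)
  map_add x hx y hy := hs.map_add x (hW hx) y (hW hy)
  map_smul x hx := hs.map_smul x (hW hx)
  pos x hx := hs.pos x (hW hx)
  sect_eq := rfl

theorem comp {G X' : Type*} [Group G] [AddCommGroup X'] [Module ℝ X'] [TopologicalSpace X']
    {V' : Set X'} {η : G → X' → X'} {τ : G → X → X} {φ : X' → X}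
    (hs : IsConicSection V L Q) (hφ : IsConicHom G V' η V τ φ) :
    IsConicSection V' (L ∘ φ) {y ∈ V' | L (φ y) = 1} where
  continuousOn := hs.continuousOn.comp hφ.continuousOn hφ.mapsTo
  nonneg y hy := hs.nonneg _ (hφ.mapsTo hy)
  map_add y hy z hz := by
    have h : φ (y + z) = φ y + φ z := by
      simpa using hφ.conic y hy z hz 1 1 zero_le_one zero_le_one
    simp only [Function.comp_apply, h, hs.map_add _ (hφ.mapsTo hy) _ (hφ.mapsTo hz)]
  map_smul y hy a ha := by
    have h : φ (a • y) = a • φ y := by simpa using hφ.conic y hy y hy a 0 ha le_rfl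
    simp only [Function.comp_apply, h, hs.map_smul _ (hφ.mapsTo hy) a ha]
  pos y hy hy0 := hs.pos _ (hφ.mapsTo hy) (hφ.ne_zero y hy hy0)
  sect_eq := rfl

theorem le_of_forall_mem (hs : IsConicSection V L Q) (hV : IsCone V) {f g : X → ℝ}
    (hf : ∀ x ∈ V, ∀ a : ℝ, 0 ≤ a → f (a • x) = a * f x)
    (hg : ∀ x ∈ V, ∀ a : ℝ, 0 ≤ a → g (a • x) = a * g x)
    (h : ∀ q ∈ Q, g q ≤ f q) {x : X} (hx : x ∈ V) : g x ≤ f x := by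
  by_cases hx0 : x = 0
  · subst hx0
    have hf0 : f 0 = 0 := by simpa using hf 0 hx 0 le_rfl
    have hg0 : g 0 = 0 := by simpa using hg 0 hx 0 le_rfl
    rw [hf0, hg0]
  · have hLx := hs.pos x hx hx0
    have hxq : x = L x • (L x)⁻¹ • x := by
      rw [smul_smul, mul_inv_cancel₀ hLx.ne', one_smul]
    have hq := hs.inv_smul_mem hV hx hx0
    rw [hxq, hf _ (hs.subset hq) _ hLx.le, hg _ (hs.subset hq) _ hLx.le]
    exact mul_le_mul_of_nonneg_left (h _ hq) hLx.le

theorem map_eq_of_mapsTo (hs : IsConicSection V L Q) (hV : IsCone V) {f : X → X}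
    (hfV : MapsTo f V V) (hf : ∀ x ∈ V, ∀ a : ℝ, 0 ≤ a → f (a • x) = a • f x)
    (hfQ : MapsTo f Q Q) {x : X} (hx : x ∈ V) : L (f x) = L x := by
  have hLf : ∀ x ∈ V, ∀ a : ℝ, 0 ≤ a → L (f (a • x)) = a * L (f x) := by
    intro x hx a ha
    rw [hf x hx a ha, hs.map_smul _ (hfV hx) a ha]
  have hon : ∀ q ∈ Q, L (f q) = L q := fun q hq => by
    rw [(hs.mem_iff.1 (hfQ hq)).2, (hs.mem_iff.1 hq).2]
  exact le_antisymm (hs.le_of_forall_mem hV hs.map_smul hLf (fun q hq => (hon q hq).le) hx)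
    (hs.le_of_forall_mem hV hLf hs.map_smul (fun q hq => (hon q hq).ge) hx)

theorem exists_pos_mul_le (hs : IsConicSection V L Q) (hV : IsCone V) (hQ : IsCompact Q)
    {f g : X → ℝ} {Qf Qg : Set X} (hf : IsConicSection V f Qf) (hg : IsConicSection V g Qg) :
    ∃ α > 0, ∀ x ∈ V, α * g x ≤ f x := by
  have hfQ : ∀ q ∈ Q, 0 < f q := fun q hq => hf.pos q (hs.subset hq) (hs.ne_zero_of_mem hq)
  obtain ⟨M, hM⟩ := hQ.bddAbove_image <|
    (hg.continuousOn.mono hs.subset).div (hf.continuousOn.mono hs.subset)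
      fun q hq => (hfQ q hq).ne'
  have hM1 : 0 < max M 1 := lt_max_of_lt_right one_pos
  refine ⟨(max M 1)⁻¹, inv_pos.2 hM1, fun x hx => ?_⟩
  refine hs.le_of_forall_mem hV (g := fun x => (max M 1)⁻¹ * g x) hf.map_smul
    (fun x hx a ha => by rw [hg.map_smul x hx a ha, mul_left_comm]) (fun q hq => ?_) hx
  rw [inv_mul_le_iff₀ hM1, ← div_le_iff₀ (hfQ q hq)]
  exact (hM ⟨q, hq, rfl⟩).trans (le_max_left _ _)

theorem isClosed [ContinuousSMul ℝ X] [T2Space X] (hs : IsConicSection V L Q) (hV : IsCone V)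
    (hQ : IsCompact Q) : IsClosed V := by
  -- Along an ultrafilter `U → x` on `V`, either `L` is bounded and `U` lives in the compact
  -- `[0, c] • Q ∪ {0} ⊆ V`, or `L → ∞` and `(L y)⁻¹ • y ∈ Q` tends to `0 ∉ Q`.
  refine isClosed_iff_ultrafilter.2 fun x U hUx hVU => ?_
  have h0 : (0 : X) ∈ V := hV.zero_mem (U.nonempty_of_mem hVU)
  rcases U.tendsto_atTop_or_eventually_le L with hL | ⟨c, hc⟩
  · have hlim : Tendsto (fun y => (L y)⁻¹ • y) U (𝓝 0) := by
      simpa using hL.inv_tendsto_atTop.smul hUx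
    have hmem : ∀ᶠ y in (U : Filter X), (L y)⁻¹ • y ∈ Q := by
      filter_upwards [hVU, hL.eventually_gt_atTop 0] with y hy hLy
      exact hs.inv_smul_mem hV hy fun hy0 => by simp [hy0, hs.map_zero h0] at hLy
    exact absurd (hQ.isClosed.mem_of_tendsto hlim hmem) (hs.ne_zero_of_mem · rfl)
  · set K := (fun p : ℝ × X => p.1 • p.2) '' (Icc 0 c ×ˢ Q) ∪ {0}
    have hK : IsCompact K := ((isCompact_Icc.prod hQ).image continuous_smul).union
      isCompact_singleton
    have hKV : K ⊆ V := by
      rintro _ (⟨p, ⟨hp, hq⟩, rfl⟩ | rfl)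
      exacts [hV.smul_mem (hs.subset hq) hp.1, h0]
    have hmem : ∀ᶠ y in (U : Filter X), y ∈ K := by
      filter_upwards [hVU, hc] with y hy hyc
      by_cases hy0 : y = 0
      · exact Or.inr hy0
      · have hLy := hs.pos y hy hy0
        refine Or.inl ⟨(L y, (L y)⁻¹ • y),
          ⟨⟨hLy.le, hyc⟩, hs.inv_smul_mem hV hy hy0⟩, ?_⟩
        simp [smul_smul, mul_inv_cancel₀ hLy.ne']
    exact hKV (hK.isClosed.mem_of_tendsto hUx hmem)

end IsConicSection

theorem IsConicRep.exists_ne_zero {G X : Type*} [Group G] [TopologicalSpace G]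
    [AddCommGroup X] [Module ℝ X] [TopologicalSpace X] {V : Set X} {τ : G → X → X}
    (hrep : IsConicRep G V τ) : ∃ x ∈ V, x ≠ 0 := by
  by_contra! h
  exact hrep.ne_zero <|
    eq_singleton_iff_unique_mem.2 ⟨IsCone.zero_mem hrep.cone hrep.nonempty, h⟩

theorem IsConicRep.continuousOn_act {G X : Type*} [Group G] [TopologicalSpace G]
    [AddCommGroup X] [Module ℝ X] [TopologicalSpace X] {V : Set X} {τ : G → X → X}
    (hrep : IsConicRep G V τ) (g : G) : ContinuousOn (τ g) V :=
  hrep.continuousOn.comp (f := fun x => (g, x)) (by fun_prop) fun _ hx => ⟨mem_univ g, hx⟩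

section InvariantSubcone

variable {G E : Type*} [AddCommGroup E] [Module ℝ E] [TopologicalSpace E]

def IsNonzeroClosedInvariantSubcone (σ : G → E → E) (K Y : Set E) : Prop :=
  Y ⊆ K ∧ IsClosed Y ∧ IsCone Y ∧ (∀ g, MapsTo (σ g) Y Y) ∧ ∃ p ∈ Y, p ≠ 0

/-- Zorn's lemma, with chains bounded below by their intersections: these stay nonzero because
each member meets the compact section `Q`. -/
theorem exists_minimal_nonzeroClosedInvariantSubcone [T2Space E] {σ : G → E → E} {K Q : Set E}
    {ℓ : E → ℝ} (hK : IsNonzeroClosedInvariantSubcone σ K K) (hs : IsConicSection K ℓ Q)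
    (hQ : IsCompact Q) : ∃ M, Minimal (IsNonzeroClosedInvariantSubcone σ K) M := by
  have hmeet : ∀ Y, IsNonzeroClosedInvariantSubcone σ K Y → (Y ∩ Q).Nonempty := by
    rintro Y ⟨hYK, -, hYcone, -, p, hp, hp0⟩
    have hpos := hs.pos p (hYK hp) hp0
    exact ⟨_, hYcone.smul_mem hp (inv_nonneg.2 hpos.le), hs.inv_smul_mem hK.2.2.1 (hYK hp) hp0⟩
  have hbound : ∀ c ⊆ {Y | IsNonzeroClosedInvariantSubcone σ K Y}, IsChain (· ⊆ ·) c →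
      c.Nonempty →
        ∃ lb ∈ {Y | IsNonzeroClosedInvariantSubcone σ K Y}, ∀ Y ∈ c, lb ⊆ Y := by
    rintro c hc hchain ⟨Y₀, hY₀⟩
    have : Nonempty c := ⟨⟨Y₀, hY₀⟩⟩
    obtain ⟨p, hp⟩ := IsCompact.nonempty_iInter_of_directed_nonempty_isCompact_isClosed
      (fun Y : c => (Y : Set E) ∩ Q)
      (fun Y Z => (hchain.total Y.2 Z.2).elim
        (fun h => ⟨Y, Subset.rfl, inter_subset_inter_left _ h⟩)
        (fun h => ⟨Z, inter_subset_inter_left _ h, Subset.rfl⟩))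
      (fun Y => hmeet Y (hc Y.2))
      (fun Y => hQ.of_isClosed_subset ((hc Y.2).2.1.inter hQ.isClosed) inter_subset_right)
      (fun Y => (hc Y.2).2.1.inter hQ.isClosed)
    simp only [mem_iInter] at hp
    exact ⟨⋂₀ c, ⟨(sInter_subset_of_mem hY₀).trans (hc hY₀).1,
      isClosed_sInter fun Y hY => (hc hY).2.1, IsCone.sInter fun Y hY => (hc hY).2.2.1,
      fun g p hp Y hY => (hc hY).2.2.2.1 g (hp Y hY),
      p, fun Y hY => (hp ⟨Y, hY⟩).1, hs.ne_zero_of_mem (hp ⟨Y₀, hY₀⟩).2⟩,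
      fun Y hY => sInter_subset_of_mem hY⟩
  obtain ⟨M, -, hM⟩ := zorn_superset_nonempty _ hbound K hK
  exact ⟨M, hM⟩

end InvariantSubcone

theorem continuousWithinAt_of_graph_subset_isClosed {α : Type*} [TopologicalSpace α]
    {f : α → ℝ} {s : Set α} {x : α} {M : Set (α × ℝ)} (hM : IsClosed M)
    (hfM : ∀ y ∈ s, (y, f y) ∈ M) (huniq : ∀ t, (x, t) ∈ M → t = f x) {c d : ℝ}
    (hbdd : ∀ᶠ y in 𝓝[s] x, f y ∈ Icc c d) : ContinuousWithinAt f s x := by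
  refine isCompact_Icc.tendsto_nhds_of_unique_mapClusterPt hbdd fun t _ ht => huniq t ?_
  obtain ⟨U, hU, hUt⟩ := mapClusterPt_iff_ultrafilter.1 ht
  exact hM.mem_of_tendsto ((tendsto_id.mono_left (hU.trans nhdsWithin_le_nhds)).prodMk_nhds hUt)
    ((eventually_mem_nhdsWithin.mono hfM).filter_mono hU)

def conicBand {X : Type*} (V : Set X) (L : X → ℝ) (a b : ℝ) : Set (X × ℝ) :=
  {p | p.1 ∈ V ∧ a * L p.1 ≤ p.2 ∧ p.2 ≤ b * L p.1}

theorem isClosed_conicBand {X : Type*} [TopologicalSpace X] {V : Set X} {L : X → ℝ}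
    {a b : ℝ} (hV : IsClosed V) (hL : ContinuousOn L V) : IsClosed (conicBand V L a b) := by
  have hLfst : ContinuousOn (fun p : X × ℝ => L p.1) (V ×ˢ univ) :=
    hL.comp continuousOn_fst fun _ hp => hp.1
  have h := ((hV.prod isClosed_univ).isClosed_le (f := fun p : X × ℝ => a * L p.1)
    (g := Prod.snd) (continuousOn_const.mul hLfst) continuousOn_snd).isClosed_le
    (f := Prod.snd) (g := fun p => b * L p.1) continuousOn_snd
    (continuousOn_const.mul (hLfst.mono fun _ hp => hp.1))
  convert h using 1
  ext p
  simp [conicBand, and_assoc]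

section Band

variable {X : Type*} [AddCommGroup X] [Module ℝ X] [TopologicalSpace X] {V : Set X}
  {L : X → ℝ} {Q : Set X} {a b : ℝ}

theorem eq_zero_of_mem_conicBand (hs : IsConicSection V L Q) {p : X × ℝ}
    (hp : p ∈ conicBand V L a b) (hp1 : p.1 = 0) : p = 0 := by
  obtain ⟨hpV, hlo, hhi⟩ := hp
  rw [hp1] at hpV hlo hhi
  rw [hs.map_zero hpV, mul_zero] at hlo hhi
  exact Prod.ext hp1 (le_antisymm hhi hlo)

theorem IsConicSection.fst (hs : IsConicSection V L Q) {Y : Set (X × ℝ)}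
    (hY : Y ⊆ conicBand V L a b) :
    IsConicSection Y (fun p => L p.1) {p ∈ Y | L p.1 = 1} where
  continuousOn := hs.continuousOn.comp continuousOn_fst fun _ hp => (hY hp).1
  nonneg p hp := hs.nonneg p.1 (hY hp).1
  map_add p hp q hq := hs.map_add p.1 (hY hp).1 q.1 (hY hq).1
  map_smul p hp := hs.map_smul p.1 (hY hp).1
  pos p hp hp0 := hs.pos p.1 (hY hp).1 fun h => hp0 (eq_zero_of_mem_conicBand hs (hY hp) h)
  sect_eq := rfl

theorem IsConicSection.isCompact_fst (hs : IsConicSection V L Q) (hQ : IsCompact Q)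
    {Y : Set (X × ℝ)} (hYc : IsClosed Y) (hY : Y ⊆ conicBand V L a b) :
    IsCompact {p ∈ Y | L p.1 = 1} := by
  refine (hQ.prod (isCompact_Icc (a := a) (b := b))).of_isClosed_subset
    (hYc.isClosed_eq (hs.fst hY).continuousOn continuousOn_const) ?_
  rintro p ⟨hp, h1⟩
  obtain ⟨hpV, hlo, hhi⟩ := hY hp
  rw [h1, mul_one] at hlo hhi
  exact ⟨hs.mem_iff.2 ⟨hpV, h1⟩, hlo, hhi⟩

theorem IsConicSection.of_graph (hs : IsConicSection V L Q) (ha : 0 < a) (hb : 0 ≤ b)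
    {M : Set (X × ℝ)} (hMc : IsClosed M) (hM : IsCone M) (hMband : M ⊆ conicBand V L a b)
    {f : X → ℝ} (hfM : ∀ x ∈ V, (x, f x) ∈ M)
    (huniq : ∀ x ∈ V, ∀ t, (x, t) ∈ M → t = f x) :
    IsConicSection V f {x ∈ V | f x = 1} where
  continuousOn x hx := by
    refine continuousWithinAt_of_graph_subset_isClosed hMc hfM (huniq x hx)
      (c := 0) (d := b * (L x + 1)) ?_
    filter_upwards [self_mem_nhdsWithin, (hs.continuousOn x hx).eventually_lt
      continuousWithinAt_const (lt_add_one (L x))] with y hy hLy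
    obtain ⟨-, hlo, hhi⟩ := hMband (hfM y hy)
    exact ⟨(mul_nonneg ha.le (hs.nonneg y hy)).trans hlo,
      hhi.trans (mul_le_mul_of_nonneg_left hLy.le hb)⟩
  nonneg x hx := (mul_nonneg ha.le (hs.nonneg x hx)).trans (hMband (hfM x hx)).2.1
  map_add x hx y hy := by
    have h : (x + y, f x + f y) ∈ M := hM.add_mem (hfM x hx) (hfM y hy)
    exact (huniq _ (hMband h).1 _ h).symm
  map_smul x hx c hc := by
    have h : (c • x, c * f x) ∈ M := hM.smul_mem (hfM x hx) hc
    exact (huniq _ (hMband h).1 _ h).symm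
  pos x hx hx0 := (mul_pos ha (hs.pos x hx hx0)).trans_le (hMband (hfM x hx)).2.1
  sect_eq := rfl

end Band

section MinimalSubcone

variable {G X : Type*} [AddCommGroup X] [Module ℝ X] [TopologicalSpace X] {τ : G → X → X}
  {K M : Set (X × ℝ)}

theorem mapsTo_scale_of_minimal
    (hM : Minimal (IsNonzeroClosedInvariantSubcone (fun g => Prod.map (τ g) id) K) M)
    {r : ℝ} {p : X × ℝ} (hp : p ∈ M) (hp0 : p ≠ 0) (hrp : (p.1, r * p.2) ∈ M) :
    MapsTo (fun q : X × ℝ => (q.1, r * q.2)) M M := by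
  obtain ⟨hMK, hMc, hMcone, hMinv, -⟩ := hM.1
  have hYcone : IsCone (M ∩ (fun q : X × ℝ => (q.1, r * q.2)) ⁻¹' M) :=
    hMcone.inter <| hMcone.preimage fun u v a b => by
      ext
      · simp
      · simp only [Prod.snd_add, Prod.smul_snd, smul_eq_mul]
        ring
  have hY : IsNonzeroClosedInvariantSubcone (fun g => Prod.map (τ g) id) K
      (M ∩ (fun q : X × ℝ => (q.1, r * q.2)) ⁻¹' M) :=
    ⟨inter_subset_left.trans hMK, hMc.inter (hMc.preimage (by fun_prop)), hYcone,
      fun g _ hq => ⟨hMinv g hq.1, hMinv g hq.2⟩, p, ⟨hp, hrp⟩, hp0⟩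
  exact fun q hq => (hM.2 hY inter_subset_left hq).2

variable {V : Set X} {L : X → ℝ} {Q : Set X} {a b : ℝ}

theorem snd_eq_of_minimal (hs : IsConicSection V L Q) (ha : 0 < a)
    (hK : K ⊆ conicBand V L a b)
    (hM : Minimal (IsNonzeroClosedInvariantSubcone (fun g => Prod.map (τ g) id) K) M)
    {x : X} {t t' : ℝ} (ht : (x, t) ∈ M) (ht' : (x, t') ∈ M) : t = t' := by
  have hMband := hM.1.1.trans hK
  suffices h : ∀ t t', (x, t) ∈ M → (x, t') ∈ M → ¬ t' < t from
    le_antisymm (not_lt.1 (h t t' ht ht')) (not_lt.1 (h t' t ht' ht))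
  intro t t' ht ht' hlt
  obtain ⟨hxV, hlo, -⟩ := hMband ht'
  have hx0 : x ≠ 0 := fun hx0 => by
    have h := congrArg Prod.snd (eq_zero_of_mem_conicBand hs (hMband ht) hx0)
    have h' := congrArg Prod.snd (eq_zero_of_mem_conicBand hs (hMband ht') hx0)
    simp only [Prod.snd_zero] at h h'
    exact hlt.ne (h'.trans h.symm)
  have ht'pos : 0 < t' := (mul_pos ha (hs.pos x hxV hx0)).trans_le hlo
  have hr : 1 < t / t' := (one_lt_div ht'pos).2 hlt
  have hscale := mapsTo_scale_of_minimal hM ht' (fun h => hx0 (congrArg Prod.fst h))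
    (r := t / t') (by rwa [div_mul_cancel₀ t ht'pos.ne'])
  have hpow : ∀ n : ℕ, (x, (t / t') ^ n * t') ∈ M := by
    intro n
    induction n with
    | zero => simpa using ht'
    | succ n ih => simpa [pow_succ, mul_comm, mul_left_comm, mul_assoc] using hscale ih
  obtain ⟨n, hn⟩ := pow_unbounded_of_one_lt (b * L x / t') hr
  have hle := (hMband (hpow n)).2.2
  rw [div_lt_iff₀ ht'pos] at hn
  exact hle.not_gt hn

variable [ContinuousSMul ℝ X] [T2Space X]

theorem fst_image_eq_of_irreducible [Group G] (hirr : IsIrreducibleConicRep G V τ)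
    (hs : IsConicSection V L Q) (hQ : IsCompact Q) (hK : K ⊆ conicBand V L a b)
    (hM : IsNonzeroClosedInvariantSubcone (fun g => Prod.map (τ g) id) K M) :
    Prod.fst '' M = V := by
  obtain ⟨hMK, hMc, hMcone, hMinv, p, hp, hp0⟩ := hM
  have hMband := hMK.trans hK
  have hWV : Prod.fst '' M ⊆ V := by
    rintro _ ⟨q, hq, rfl⟩
    exact (hMband hq).1
  have hWcone : IsCone (Prod.fst '' M) := hMcone.image fun _ _ _ _ _ _ _ _ => rfl
  have hWsec : IsCompact {x ∈ Prod.fst '' M | L x = 1} := by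
    convert ((hs.isCompact_fst hQ hMc hMband).image continuous_fst) using 1
    ext x
    simp only [mem_image, Prod.exists, exists_and_right, exists_eq_right, mem_ofPred_eq]
  refine hirr _ hWV ⟨p.1, p, hp, rfl⟩ ?_ ((hs.mono hWV).isClosed hWcone hWsec) hWcone ?_
  · intro h
    have : p.1 ∈ Prod.fst '' M := ⟨p, hp, rfl⟩
    rw [h] at this
    exact hp0 (eq_zero_of_mem_conicBand hs (hMband hp) this)
  · rintro g _ ⟨q, hq, rfl⟩
    exact ⟨_, hMinv g hq, rfl⟩

end MinimalSubcone

theorem isDegenerate_of_irreducible_of_conicBand {G X : Type*} [Group G]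
    [TopologicalSpace G] [AddCommGroup X] [Module ℝ X] [TopologicalSpace X]
    [IsTopologicalAddGroup X] [ContinuousSMul ℝ X] [T2Space X] {V : Set X} {τ : G → X → X}
    (hrep : IsConicRep G V τ) (hirr : IsIrreducibleConicRep G V τ) {L : X → ℝ} {Q : Set X}
    (hs : IsConicSection V L Q) (hQ : IsCompact Q) {a b : ℝ} (ha : 0 < a) (hb : 0 ≤ b)
    {Λ : Set (X × ℝ)} (hΛ : Λ ⊆ conicBand V L a b) (hΛcone : IsCone Λ)
    (hΛinv : ∀ g, MapsTo (Prod.map (τ g) id) Λ Λ) (hΛ0 : ∃ p ∈ Λ, p ≠ 0) :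
    IsDegenerateConicRep G V τ := by
  have hK : closure Λ ⊆ conicBand V L a b :=
    closure_minimal hΛ (isClosed_conicBand (hs.isClosed hrep.cone hQ) hs.continuousOn)
  have hKinv : ∀ g, MapsTo (Prod.map (τ g) id) (closure Λ) (closure Λ) := fun g =>
    (hΛinv g).closure_of_continuousOn <|
      ((hrep.continuousOn_act g).prodMap (continuousOn_id (s := univ))).mono
        fun p hp => ⟨(hK hp).1, mem_univ _⟩
  obtain ⟨M, hM⟩ := exists_minimal_nonzeroClosedInvariantSubcone
    ⟨Subset.rfl, isClosed_closure, hΛcone.closure, hKinv,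
      hΛ0.imp fun p hp => ⟨subset_closure hp.1, hp.2⟩⟩
    (hs.fst hK) (hs.isCompact_fst hQ isClosed_closure hK)
  obtain ⟨hMK, hMc, hMcone, hMinv, -⟩ := hM.1
  have hfib : ∀ x ∈ V, ∃ t, (x, t) ∈ M := by
    rw [← fst_image_eq_of_irreducible hirr hs hQ hK hM.1]
    rintro _ ⟨p, hp, rfl⟩
    exact ⟨p.2, hp⟩
  choose! f hf using hfib
  have huniq : ∀ x ∈ V, ∀ t, (x, t) ∈ M → t = f x := fun x hx t ht =>
    snd_eq_of_minimal hs ha hK hM ht (hf x hx)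
  refine ⟨f, _, hs.of_graph ha hb hMc hMcone (hMK.trans hK) hf huniq,
    fun g x ⟨hx, hx1⟩ => ⟨hrep.mapsTo g hx, ?_⟩⟩
  rw [← hx1]
  exact (huniq _ (hrep.mapsTo g hx) _ (hMinv g (hf x hx))).symm

theorem stmt_17_general {G X' X : Type*} [Group G] [TopologicalSpace G]
    [AddCommGroup X'] [Module ℝ X'] [TopologicalSpace X']
    [AddCommGroup X] [Module ℝ X] [TopologicalSpace X]
    [IsTopologicalAddGroup X] [ContinuousSMul ℝ X] [T2Space X]
    (V : Set X) (τ : G → X → X) (hrep : IsConicRep G V τ)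
    (hirr : IsIrreducibleConicRep G V τ)
    (V' : Set X') (η : G → X' → X') (hrep' : IsConicRep G V' η)
    (hdeg' : IsDegenerateConicRep G V' η)
    (φ : X' → X) (hφ : IsConicHom G V' η V τ φ) (hφsurj : φ '' V' = V) :
    IsDegenerateConicRep G V τ := by
  obtain ⟨L, Q, hs, hQ⟩ := hrep.exists_compact_section
  obtain ⟨L₀', Q₀', hs₀', hQ₀'⟩ := hrep'.exists_compact_section
  obtain ⟨L', Q', hs', hQ'⟩ := hdeg'
  have hL'inv : ∀ g, ∀ y ∈ V', L' (η g y) = L' y := fun g y hy =>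
    hs'.map_eq_of_mapsTo hrep'.cone (hrep'.mapsTo g)
      (fun y hy a ha => by simpa using hrep'.conic_act g y hy y hy a 0 ha le_rfl) (hQ' g) hy
  obtain ⟨a, ha, hlo⟩ := hs₀'.exists_pos_mul_le hrep'.cone hQ₀' hs' (hs.comp hφ)
  obtain ⟨c, hc, hhi⟩ := hs₀'.exists_pos_mul_le hrep'.cone hQ₀' (hs.comp hφ) hs'
  refine isDegenerate_of_irreducible_of_conicBand hrep hirr hs hQ ha (inv_nonneg.2 hc.le)
    (Λ := (fun y => (φ y, L' y)) '' V') ?_ ?_ ?_ ?_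
  · rintro _ ⟨y, hy, rfl⟩
    exact ⟨hφ.mapsTo hy, hlo y hy, (le_inv_mul_iff₀ hc).2 (hhi y hy)⟩
  · refine IsCone.image hrep'.cone fun y hy z hz s t hs₁ ht => ?_
    simp only [hφ.conic y hy z hz s t hs₁ ht, hs'.map_comb hrep'.cone hy hz hs₁ ht,
      Prod.smul_mk, Prod.mk_add_mk, smul_eq_mul]
  · rintro g _ ⟨y, hy, rfl⟩
    exact ⟨η g y, hrep'.mapsTo g hy, by simp [hφ.equivariant g y hy, hL'inv g y hy]⟩
  · obtain ⟨x, hx, hx0⟩ := hrep.exists_ne_zero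
    rw [← hφsurj] at hx
    obtain ⟨y, hy, rfl⟩ := hx
    exact ⟨_, ⟨y, hy, rfl⟩, fun h => hx0 (congrArg Prod.fst h)⟩

/-- Let `(V,τ)` be an irreducible conic representation of a topological
group `G` that is a factor of some degenerate conic representation of `G` (i.e. there exists a
surjective homomorphism of conic representations from a degenerate conic representation
`(V',η)` onto `(V,τ)`).  Then `(V,τ)` is itself degenerate: it admits a `G`-invariant
section. -/
theorem stmt_17 {G X' X : Type*} [Group G] [TopologicalSpace G] [IsTopologicalGroup G]
    [AddCommGroup X'] [Module ℝ X'] [TopologicalSpace X']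
    [IsTopologicalAddGroup X'] [ContinuousSMul ℝ X'] [T2Space X'] [SeparatingDual ℝ X']
    [AddCommGroup X] [Module ℝ X] [TopologicalSpace X]
    [IsTopologicalAddGroup X] [ContinuousSMul ℝ X] [T2Space X] [SeparatingDual ℝ X]
    (V : Set X) (τ : G → X → X) (hrep : IsConicRep G V τ)
    (hirr : IsIrreducibleConicRep G V τ)
    (V' : Set X') (η : G → X' → X') (hrep' : IsConicRep G V' η)
    (hdeg' : IsDegenerateConicRep G V' η)
    (φ : X' → X) (hφ : IsConicHom G V' η V τ φ) (hφsurj : φ '' V' = V) :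
    IsDegenerateConicRep G V τ :=
  stmt_17_general V τ hrep hirr V' η hrep' hdeg' φ hφ hφsurj
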